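/- Let P_n be the path on n vertices and let k ≥ 2 be an integer with k ≤ n. Then the Steiner k-Wiener index of P_n equals SW_k(P_n) = Σ_{j=k−1}^{n−1} j·(n−j)·C(j−1, k−2) = (k−1)·C(n+1, k+1), where C(·,·) denotes binomial coefficients. -/

import Mathlib

/-!
In the path `P_n` the Steiner distance of `S` is `max S - min S`: a geodesic from `min S` to
`max S` runs through every vertex in between, and any connected subgraph containing both ends
has at least `dist (min S) (max S)` edges. So `d(S)` counts the edges `{j, j + 1}` that `S`
straddles, and double counting gives
`SW_k(P_n) = ∑_j (C(n, k) - C(j + 1, k) - C(n - 1 - j, k))`, which the hockey-stick identity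
turns into `(k - 1) C(n + 1, k + 1)`. The first closed form reduces to the same value through
`j C(j - 1, k - 2) = (k - 1) C(j, k - 1)` and `∑_j (n - j) C(j, k - 1) = C(n + 1, k + 1)`.
-/

open Finset SimpleGraph Polynomial

/-- The Steiner distance of a vertex set `S`: the minimum number of edges of a
connected subgraph of `G` whose vertex set contains `S`. -/
noncomputable def steinerDist {V : Type*} (G : SimpleGraph V) (S : Set V) : ℕ :=
  sInf {n | ∃ H : G.Subgraph, H.Connected ∧ S ⊆ H.verts ∧ H.edgeSet.ncard = n}

/-- The Steiner `k`-Wiener index. -/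
noncomputable def SW {V : Type*} [Fintype V] [DecidableEq V] (k : ℕ) (G : SimpleGraph V) : ℕ :=
  ∑ S ∈ Finset.powersetCard k (Finset.univ : Finset V), steinerDist G (S : Set V)

/-- The Steiner `k`-hyper-Wiener index. -/
noncomputable def SWW {V : Type*} [Fintype V] [DecidableEq V] (k : ℕ) (G : SimpleGraph V) : ℝ :=
  (1/2) * ∑ S ∈ Finset.powersetCard k (Finset.univ : Finset V), (steinerDist G (S : Set V) : ℝ)
    + (1/2) * ∑ S ∈ Finset.powersetCard k (Finset.univ : Finset V), (steinerDist G (S : Set V) : ℝ) ^ 2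

/-- The Steiner `k`-Hosoya polynomial `∑_{m ≥ 0} d_k(G,m) x^m`, written as
`∑_{S ⊆ V(G), |S| = k} x^{d(S)}`. -/
noncomputable def SH {V : Type*} [Fintype V] [DecidableEq V] (k : ℕ) (G : SimpleGraph V) :
    Polynomial ℝ :=
  ∑ S ∈ Finset.powersetCard k (Finset.univ : Finset V), Polynomial.X ^ (steinerDist G (S : Set V))

/-- The Wiener index `W(G) = ∑_{{u,v} ⊆ V(G)} d(u,v)` (each unordered pair counted once). -/
noncomputable def wiener {V : Type*} [Fintype V] [DecidableEq V] (G : SimpleGraph V) : ℝ :=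
  (∑ p ∈ Finset.univ.offDiag, (G.dist p.1 p.2 : ℝ)) / 2

/-- `\overline{WW}(G) = ∑_{{u,v} ⊆ V(G)} d(u,v)²`. -/
noncomputable def WWbar {V : Type*} [Fintype V] [DecidableEq V] (G : SimpleGraph V) : ℝ :=
  (∑ p ∈ Finset.univ.offDiag, (G.dist p.1 p.2 : ℝ) ^ 2) / 2

/-- The set of ordered triples of pairwise distinct vertices. -/
def O3 (V : Type*) [Fintype V] [DecidableEq V] : Finset (V × V × V) :=
  Finset.univ.filter fun t => t.1 ≠ t.2.1 ∧ t.1 ≠ t.2.2 ∧ t.2.1 ≠ t.2.2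

/-- `\widehat{WW}(G) = ∑_{(u,v,w) ∈ O₃(G)} d(u,v)·d(u,w)`. -/
noncomputable def WWhat {V : Type*} [Fintype V] [DecidableEq V] (G : SimpleGraph V) : ℝ :=
  ∑ t ∈ O3 V, (G.dist t.1 t.2.1 : ℝ) * (G.dist t.1 t.2.2 : ℝ)

/-- `z` is a median of the triple `u, v, w`: it lies on a shortest `u,v`-path, a shortest
`u,w`-path and a shortest `v,w`-path. -/
def IsMedian {V : Type*} (G : SimpleGraph V) (u v w z : V) : Prop :=
  G.dist u z + G.dist z v = G.dist u v ∧
  G.dist u z + G.dist z w = G.dist u w ∧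
  G.dist v z + G.dist z w = G.dist v w

/-- A modular graph: a connected graph in which every triple of vertices has a median. -/
def IsModular {V : Type*} (G : SimpleGraph V) : Prop :=
  G.Connected ∧ ∀ u v w : V, ∃ z : V, IsMedian G u v w z

/-- The hypercube graph `Q_n` on `Fin n → Bool`: two vertices are adjacent iff they differ
in exactly one coordinate. -/
def hypercubeGraph (n : ℕ) : SimpleGraph (Fin n → Bool) :=
  SimpleGraph.fromRel fun x y => ∃! i, x i ≠ y i

/-- A partial cube: a connected graph isometrically embeddable into a hypercube. -/
def IsPartialCube {V : Type*} (G : SimpleGraph V) : Prop :=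
  G.Connected ∧ ∃ (n : ℕ) (f : V → (Fin n → Bool)),
    ∀ u v : V, (hypercubeGraph n).dist (f u) (f v) = G.dist u v

/-- The Djoković–Winkler relation Θ on (edges viewed as) unordered pairs:
`s(u₁,v₁) Θ s(u₂,v₂)` iff `d(u₁,u₂) + d(v₁,v₂) ≠ d(u₁,v₂) + d(v₁,u₂)`. -/
def theta {V : Type*} (G : SimpleGraph V) (e f : Sym2 V) : Prop :=
  ∃ u₁ v₁ u₂ v₂ : V, e = s(u₁, v₁) ∧ f = s(u₂, v₂) ∧
    G.dist u₁ u₂ + G.dist v₁ v₂ ≠ G.dist u₁ v₂ + G.dist v₁ u₂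

/-- `E` together with the component data `U`, `U'` is the family of Θ-classes of the
partial cube `G`: each `E i` is a Θ-class of edges, the classes are pairwise distinct and
cover the edge set, and `U i`, `U' i` are (the vertex sets of) the two connected components
of `G - E i`. -/
def IsThetaClassSetup {V : Type*} (G : SimpleGraph V) (d : ℕ)
    (E : Fin d → Set (Sym2 V)) (U U' : Fin d → Set V) : Prop :=
  (∀ i, ∃ e ∈ G.edgeSet, E i = {f | f ∈ G.edgeSet ∧ theta G f e}) ∧
  Function.Injective E ∧
  G.edgeSet = ⋃ i, E i ∧
  ∀ i, ∃ c c' : (G.deleteEdges (E i)).ConnectedComponent, c ≠ c' ∧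
    U i = c.supp ∧ U' i = c'.supp ∧
    ∀ b : (G.deleteEdges (E i)).ConnectedComponent, b = c ∨ b = c'

namespace SimpleGraph

variable {V : Type*} {G : SimpleGraph V} {u v : V}

lemma Walk.ncard_edgeSet_le_length (p : G.Walk u v) : p.edgeSet.ncard ≤ p.length := by
  classical
  rw [← p.coe_edges_toFinset, Set.ncard_coe_finset, ← p.length_edges]
  exact List.toFinset_card_le _

lemma Walk.IsPath.ncard_edgeSet {p : G.Walk u v} (hp : p.IsPath) : p.edgeSet.ncard = p.length := by
  classical
  rw [← p.coe_edges_toFinset, Set.ncard_coe_finset, ← p.length_edges,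
    List.toFinset_card_of_nodup hp.isTrail.edges_nodup]

lemma Subgraph.Connected.dist_le_ncard_edgeSet {H : G.Subgraph} (hH : H.Connected)
    (hfin : H.edgeSet.Finite) (hu : u ∈ H.verts) (hv : v ∈ H.verts) :
    G.dist u v ≤ H.edgeSet.ncard := by
  classical
  obtain ⟨p, hpH⟩ := (Subgraph.connected_iff_forall_exists_walk_subgraph H).mp hH |>.2 hu hv
  have hbH : p.bypass.edgeSet ⊆ H.edgeSet := fun e he =>
    Subgraph.edgeSet_mono (Walk.toSubgraph_bypass_le_toSubgraph.trans hpH)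
      (by rwa [Walk.edgeSet_toSubgraph])
  calc G.dist u v ≤ p.bypass.length := dist_le _
    _ = p.bypass.edgeSet.ncard := (p.bypass_isPath.ncard_edgeSet).symm
    _ ≤ H.edgeSet.ncard := Set.ncard_le_ncard hbH hfin

end SimpleGraph

section SteinerDist

variable {V : Type*} {G : SimpleGraph V} {u v : V} {S : Set V}

lemma steinerDist_le_ncard_edgeSet {H : G.Subgraph} (hH : H.Connected) (hS : S ⊆ H.verts) :
    steinerDist G S ≤ H.edgeSet.ncard :=
  Nat.sInf_le ⟨H, hH, hS, rfl⟩

lemma steinerDist_le_length (p : G.Walk u v) (hS : S ⊆ {x | x ∈ p.support}) :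
    steinerDist G S ≤ p.length :=
  (steinerDist_le_ncard_edgeSet p.toSubgraph_connected (by simpa using hS)).trans
    (by simpa using p.ncard_edgeSet_le_length)

lemma steinerDist_eq_dist [Finite V] (p : G.Walk u v) (hp : p.length = G.dist u v)
    (hu : u ∈ S) (hv : v ∈ S) (hS : S ⊆ {x | x ∈ p.support}) :
    steinerDist G S = G.dist u v := by
  refine le_antisymm (hp ▸ steinerDist_le_length p hS) (le_csInf ⟨_, p.toSubgraph,
    p.toSubgraph_connected, by simpa using hS, rfl⟩ ?_)
  rintro _ ⟨H, hH, hSH, rfl⟩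
  exact hH.dist_le_ncard_edgeSet (Set.toFinite _) (hSH hu) (hSH hv)

end SteinerDist

namespace SimpleGraph

variable {n : ℕ} {x y z : Fin n}

lemma pathGraph_sub_le_length (p : (pathGraph n).Walk x y) : (y : ℕ) - x ≤ p.length := by
  induction p with
  | nil => simp
  | cons h _ ih =>
    rw [pathGraph_adj] at h
    rw [Walk.length_cons]
    omega

lemma pathGraph_mem_support_of_le_of_le (p : (pathGraph n).Walk x y) (hxz : x ≤ z)
    (hzy : z ≤ y) : z ∈ p.support := by
  induction p with
  | nil => simp [le_antisymm hxz hzy]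
  | @cons x x' _ h _ ih =>
    rcases hxz.eq_or_lt with rfl | hxz
    · simp
    · rw [pathGraph_adj] at h
      simp [ih (Fin.le_def.mpr (by omega)) hzy]

lemma pathGraph_dist (hxy : x ≤ y) : (pathGraph n).dist x y = y - x := by
  refine le_antisymm ?_ ?_
  · induction hd : (y : ℕ) - x generalizing y with
    | zero => simp [Fin.le_antisymm hxy (Fin.le_def.mpr (by omega))]
    | succ d ih =>
      set y' : Fin n := ⟨y - 1, by omega⟩
      have hadj : (pathGraph n).Adj y' y := pathGraph_adj.mpr (.inl (by simp [y']; omega))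
      calc (pathGraph n).dist x y ≤ (pathGraph n).dist x y' + (pathGraph n).dist y' y :=
            (pathGraph_preconnected n x y').dist_triangle_left y
        _ ≤ d + 1 := by
          rw [dist_eq_one_iff_adj.mpr hadj]
          exact Nat.add_le_add_right (ih (Fin.le_def.mpr (by simp [y']; omega))
            (by simp [y']; omega)) 1
  · obtain ⟨p, hp⟩ := (pathGraph_preconnected n x y).exists_walk_length_eq_dist
    exact hp ▸ pathGraph_sub_le_length p

end SimpleGraph

lemma steinerDist_pathGraph {n : ℕ} (S : Finset (Fin n)) (hS : S.Nonempty) :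
    steinerDist (pathGraph n) S = (S.max' hS : ℕ) - S.min' hS := by
  have hle : S.min' hS ≤ S.max' hS := S.min'_le _ (S.max'_mem hS)
  obtain ⟨p, hp⟩ :=
    (pathGraph_preconnected n (S.min' hS) (S.max' hS)).exists_walk_length_eq_dist
  rw [steinerDist_eq_dist p hp (S.min'_mem hS) (S.max'_mem hS)
    fun x hx => pathGraph_mem_support_of_le_of_le p (S.min'_le x hx) (S.le_max' x hx),
    pathGraph_dist hle]

namespace Nat

lemma sum_range_choose_eq_choose_succ (N K : ℕ) :
    ∑ i ∈ range N, i.choose K = N.choose (K + 1) := by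
  induction N with
  | zero => simp
  | succ N ih => rw [sum_range_succ, ih, choose_succ_succ', add_comm]

lemma sum_range_sub_mul_choose (N K : ℕ) :
    ∑ j ∈ range N, (N - j) * j.choose K = (N + 1).choose (K + 2) := by
  induction N with
  | zero => rw [sum_range_zero, choose_eq_zero_of_lt (by omega)]
  | succ N ih =>
    have hsplit : ∀ j ∈ range (N + 1),
        (N + 1 - j) * j.choose K = (N - j) * j.choose K + j.choose K := fun j hj => by
      rw [Nat.sub_add_comm (mem_range_succ_iff.mp hj), add_one_mul]
    rw [sum_congr rfl hsplit, sum_add_distrib, sum_range_succ, ih, Nat.sub_self, zero_mul,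
      add_zero, sum_range_choose_eq_choose_succ, choose_succ_succ' (N + 1) (K + 1), add_comm]

lemma sum_Icc_mul_sub_mul_choose (n m : ℕ) :
    ∑ j ∈ Icc (m + 1) (n - 1), j * (n - j) * (j - 1).choose m
      = (m + 1) * (n + 1).choose (m + 3) := by
  have hterm : ∀ j, j * (n - j) * (j - 1).choose m = (m + 1) * ((n - j) * j.choose (m + 1)) := by
    rintro (_ | j)
    · simp
    · rw [Nat.add_sub_cancel, mul_right_comm, add_one_mul_choose_eq]
      ring
  rw [sum_congr rfl fun j _ => hterm j, ← mul_sum, ← sum_range_sub_mul_choose]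
  congr 1
  refine sum_subset (fun j hj => by simp only [mem_Icc, mem_range] at hj ⊢; omega)
    fun j hj hj' => ?_
  simp only [mem_Icc, mem_range] at hj hj'
  rw [choose_eq_zero_of_lt (by omega), mul_zero]

end Nat

section Counting

variable {n k : ℕ}

/-- `¬S ⊆ Iic j ∧ ¬S ⊆ Ioi j` says that `S` has vertices on both sides of the edge
`{j, j + 1}`. -/
lemma max'_sub_min'_eq_card_straddled (S : Finset (Fin n)) (hS : S.Nonempty) :
    (S.max' hS : ℕ) - S.min' hS = #{j | ¬S ⊆ Iic j ∧ ¬S ⊆ Ioi j} := by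
  rw [← Fin.card_Ico]
  congr 1
  ext j
  simp only [mem_Ico, mem_filter_univ, subset_iff, mem_Iic, mem_Ioi, ← S.max'_le_iff hS,
    ← S.lt_min'_iff hS, not_le, not_lt, and_comm]

lemma card_filter_subset_powersetCard {α : Type*} [Fintype α] [DecidableEq α] (t : Finset α) :
    #{S ∈ powersetCard k univ | S ⊆ t} = (#t).choose k := by
  rw [← card_powersetCard]
  congr 1
  ext S
  simp [mem_powersetCard, and_comm]

lemma card_straddling_add_choose_add_choose (hk : 1 ≤ k) (j : Fin n) :
    #{S ∈ powersetCard k univ | ¬S ⊆ Iic j ∧ ¬S ⊆ Ioi j}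
      + ((j + 1 : ℕ).choose k + (n - 1 - j).choose k) = n.choose k := by
  have hdisj : Disjoint {S ∈ powersetCard k (univ : Finset (Fin n)) | S ⊆ Iic j}
      {S ∈ powersetCard k (univ : Finset (Fin n)) | S ⊆ Ioi j} := by
    refine disjoint_filter.mpr fun S hS hlow hhigh => ?_
    obtain ⟨x, hx⟩ := card_pos.mp ((mem_powersetCard_univ.mp hS).symm ▸ hk)
    exact (mem_Iic.mp (hlow hx)).not_gt (mem_Ioi.mp (hhigh hx))
  rw [← Fin.card_Iic, ← Fin.card_Ioi, ← card_filter_subset_powersetCard (Iic j),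
    ← card_filter_subset_powersetCard (Ioi j), ← card_union_of_disjoint hdisj, ← filter_or]
  simpa only [not_or, not_and_or, not_not, card_powersetCard, card_univ, Fintype.card_fin] using
    card_filter_add_card_filter_not (s := powersetCard k univ)
      (p := fun S : Finset (Fin n) => ¬(S ⊆ Iic j ∨ S ⊆ Ioi j))

lemma SW_pathGraph_add_choose_add_choose (hk : 1 ≤ k) :
    SW k (pathGraph n) + ((n + 1).choose (k + 1) + n.choose (k + 1)) = n * n.choose k := by
  have hSW : SW k (pathGraph n)
      = ∑ j : Fin n, #{S ∈ powersetCard k univ | ¬S ⊆ Iic j ∧ ¬S ⊆ Ioi j} := by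
    refine (sum_congr rfl fun S hS => ?_).trans
      (sum_card_bipartiteAbove_eq_sum_card_bipartiteBelow
        (fun S j => ¬S ⊆ Iic j ∧ ¬S ⊆ Ioi j))
    have hne : S.Nonempty := card_pos.mp ((mem_powersetCard_univ.mp hS).symm ▸ hk)
    rw [steinerDist_pathGraph S hne, max'_sub_min'_eq_card_straddled]
    rfl
  have hlow : ∑ j : Fin n, (j + 1 : ℕ).choose k = (n + 1).choose (k + 1) := by
    rw [Fin.sum_univ_eq_sum_range (fun j => (j + 1).choose k),
      ← Nat.sum_range_choose_eq_choose_succ,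
      sum_range_succ', Nat.choose_eq_zero_of_lt hk, add_zero]
  have hhigh : ∑ j : Fin n, (n - 1 - j).choose k = n.choose (k + 1) := by
    rw [Fin.sum_univ_eq_sum_range (fun j => (n - 1 - j).choose k),
      sum_range_reflect (fun j => j.choose k), Nat.sum_range_choose_eq_choose_succ]
  rw [hSW, ← hlow, ← hhigh, ← sum_add_distrib, ← sum_add_distrib,
    sum_congr rfl fun j _ => card_straddling_add_choose_add_choose hk j, sum_const, card_univ,
    Fintype.card_fin, smul_eq_mul]

lemma SW_pathGraph (hk : 1 ≤ k) : SW k (pathGraph n) = (k - 1) * (n + 1).choose (k + 1) := by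
  have hSW := SW_pathGraph_add_choose_add_choose (n := n) hk
  have hpascal := Nat.choose_succ_succ' n k
  have habsorb := Nat.add_one_mul_choose_eq n k
  obtain ⟨m, rfl⟩ := Nat.exists_eq_add_of_le' hk
  rw [Nat.add_sub_cancel]
  nlinarith

end Counting

theorem steiner_wiener_path_general (n k : ℕ) (hk : 2 ≤ k) :
    SW k (SimpleGraph.pathGraph n)
        = ∑ j ∈ Finset.Icc (k - 1) (n - 1), j * (n - j) * Nat.choose (j - 1) (k - 2) ∧
    SW k (SimpleGraph.pathGraph n) = (k - 1) * Nat.choose (n + 1) (k + 1) := by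
  have hSW := SW_pathGraph (n := n) (by omega : 1 ≤ k)
  refine ⟨hSW.trans ?_, hSW⟩
  obtain ⟨m, rfl⟩ := Nat.exists_eq_add_of_le' hk
  exact (Nat.sum_Icc_mul_sub_mul_choose n m).symm

/-- `SW_k(P_n) = ∑_{j=k-1}^{n-1} j(n-j)·C(j-1,k-2) = (k-1)·C(n+1,k+1)`. -/
theorem steiner_wiener_path (n k : ℕ) (hk : 2 ≤ k) (hkn : k ≤ n) :
    SW k (SimpleGraph.pathGraph n)
        = ∑ j ∈ Finset.Icc (k - 1) (n - 1), j * (n - j) * Nat.choose (j - 1) (k - 2) ∧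
    SW k (SimpleGraph.pathGraph n) = (k - 1) * Nat.choose (n + 1) (k + 1) :=
  steiner_wiener_path_general n k hk
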